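/- arXiv:1412.8203 — 6 statements merged into one kernel-verified Lean document; each statement's English description precedes it below -/
import Mathlib

section
/- For every graph G of order n with minimum degree δ(G) > 1, G has a total dominating set of size at most n·(1 + ln δ(G))/δ(G). -/
/-!
Greedy covering. If `r` vertices are still undominated, double counting gives a vertex adjacent
to `c ≥ r δ / n` of them, and `c ≥ 1`. Taking it costs one vertex and leaves `r - c`. The
potential `f(x) = x` for `x ≤ a`, `f(x) = a (1 + log (x / a))` for `x ≥ a`, with `a = n / δ`, is
concave with slope `min 1 (a / x)`, so `f(r - c) + 1 ≤ f(r)`. The greedy set therefore has at most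
`f(n) = (n / δ) (1 + log δ)` vertices.
-/

open Finset Real

noncomputable def greedyCoverBound (a x : ℝ) : ℝ :=
  if x ≤ a then x else a * (1 + log (x / a))

lemma greedyCoverBound_of_le {a x : ℝ} (h : x ≤ a) : greedyCoverBound a x = x := if_pos h

lemma greedyCoverBound_of_lt {a x : ℝ} (h : a < x) :
    greedyCoverBound a x = a * (1 + log (x / a)) := if_neg h.not_ge

lemma greedyCoverBound_sub_add_one_le {a r c : ℝ} (hc : 1 ≤ c) (hrc : r ≤ a * c) :
    greedyCoverBound a (r - c) + 1 ≤ greedyCoverBound a r := by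
  rcases le_or_gt r a with hra | har
  · rw [greedyCoverBound_of_le hra, greedyCoverBound_of_le (by linarith)]
    linarith
  have ha : 0 < a := by nlinarith
  have hr : 0 < r := ha.trans har
  have hslope : 1 ≤ a * (c / r) := by
    rw [mul_div_assoc', le_div_iff₀ hr]
    linarith
  rw [greedyCoverBound_of_lt har]
  rcases le_or_gt (r - c) a with hrca | hrca
  · rw [greedyCoverBound_of_le hrca]
    have hlog : 1 - a / r ≤ log (r / a) := by
      simpa using one_sub_inv_le_log_of_pos (div_pos hr ha)
    have hkey : r - c + a * (c / r) ≤ 2 * a - a * (a / r) := by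
      rw [← sub_nonneg]
      have : 2 * a - a * (a / r) - (r - c + a * (c / r)) = (r - a) * (c - (r - a)) / r := by
        field_simp
        ring
      rw [this]
      exact div_nonneg (mul_nonneg (by linarith) (by linarith)) hr.le
    linarith [mul_le_mul_of_nonneg_left hlog ha.le]
  · rw [greedyCoverBound_of_lt hrca]
    have hlog : c / r ≤ log (r / a) - log ((r - c) / a) := by
      rw [← log_div (by positivity) (div_pos (ha.trans hrca) ha).ne',
        div_div_div_cancel_right₀ ha.ne']
      have := one_sub_inv_le_log_of_pos (div_pos hr (ha.trans hrca))
      rw [inv_div] at this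
      convert this using 1
      field_simp
      ring
    linarith [mul_le_mul_of_nonneg_left hlog ha.le]

theorem exists_cover_card_le_greedyCoverBound {ι α : Type*} (r : ι → α → Prop)
    [∀ i x, Decidable (r i x)] {a : ℝ} (ha : 0 ≤ a)
    (hr : ∀ U : Finset α, U.Nonempty → ∃ i, (#U : ℝ) ≤ a * #{x ∈ U | r i x}) (U : Finset α) :
    ∃ S : Finset ι, (∀ x ∈ U, ∃ i ∈ S, r i x) ∧ (#S : ℝ) ≤ greedyCoverBound a #U := by
  classical
  induction U using Finset.strongInduction with
  | H U ih =>
  obtain rfl | hU := U.eq_empty_or_nonempty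
  · exact ⟨∅, by simp, by simp [greedyCoverBound_of_le ha]⟩
  obtain ⟨i, hi⟩ := hr U hU
  have hcovered : 0 < #{x ∈ U | r i x} := by
    have : (0 : ℝ) < #U := by exact_mod_cast hU.card_pos
    exact_mod_cast pos_of_mul_pos_right (this.trans_le hi) ha
  obtain ⟨x₀, hx₀⟩ := card_pos.1 hcovered
  obtain ⟨S, hS, hSc⟩ := ih {x ∈ U | ¬r i x}
    (filter_ssubset.2 ⟨x₀, (mem_filter.1 hx₀).1, not_not.2 (mem_filter.1 hx₀).2⟩)
  refine ⟨insert i S, fun x hx => ?_, ?_⟩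
  · by_cases hix : r i x
    · exact ⟨i, mem_insert_self i S, hix⟩
    · obtain ⟨j, hj, hjx⟩ := hS x (mem_filter.2 ⟨hx, hix⟩)
      exact ⟨j, mem_insert_of_mem hj, hjx⟩
  have hsplit : (#{x ∈ U | ¬r i x} : ℝ) = #U - #{x ∈ U | r i x} := by
    rw [eq_sub_iff_add_eq']
    exact_mod_cast card_filter_add_card_filter_not (s := U) (r i)
  calc (#(insert i S) : ℝ) ≤ #S + 1 := by exact_mod_cast card_insert_le i S
    _ ≤ greedyCoverBound a (#U - #{x ∈ U | r i x}) + 1 := by rw [← hsplit]; linarith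
    _ ≤ greedyCoverBound a #U :=
      greedyCoverBound_sub_add_one_le (by exact_mod_cast hcovered) hi

lemma SimpleGraph.exists_minDegree_mul_card_le_card_mul_card_filter_adj {V : Type*} [Fintype V]
    [Nonempty V] (G : SimpleGraph V) [DecidableRel G.Adj] (U : Finset V) :
    ∃ u, G.minDegree * #U ≤ Fintype.card V * #{v ∈ U | G.Adj v u} := by
  have hdouble : ∑ u, #{v ∈ U | G.Adj v u} = ∑ v ∈ U, G.degree v := by
    refine (sum_card_bipartiteAbove_eq_sum_card_bipartiteBelow (fun u v => G.Adj v u)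
      (s := univ) (t := U)).trans (sum_congr rfl fun v _ => ?_)
    rw [bipartiteBelow, ← card_neighborFinset_eq_degree, neighborFinset_eq_filter]
  obtain ⟨u, -, hu⟩ := exists_le_of_sum_le univ_nonempty
    (f := fun _ => G.minDegree * #U) (g := fun u => Fintype.card V * #{v ∈ U | G.Adj v u}) <| by
    calc ∑ _u, G.minDegree * #U = Fintype.card V * (#U * G.minDegree) := by simp [mul_comm]
      _ ≤ Fintype.card V * ∑ v ∈ U, G.degree v := by
        gcongr
        simpa using card_nsmul_le_sum U (fun v => G.degree v) G.minDegree
          fun v _ => G.minDegree_le_degree v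
      _ = _ := by rw [← hdouble, mul_sum]
  exact ⟨u, hu⟩

/-- Henning's theorem: every graph of order `n` with minimum degree `δ > 1` has a
total dominating set of size at most `n * (1 + ln δ) / δ`. -/
theorem total_domination_min_degree {V : Type*} [Fintype V] (G : SimpleGraph V)
    [DecidableRel G.Adj] (hδ : 1 < G.minDegree) :
    ∃ S : Finset V, (∀ v : V, ∃ u ∈ S, G.Adj v u) ∧
      (S.card : ℝ) ≤ (Fintype.card V : ℝ) * ((1 + Real.log (G.minDegree)) / (G.minDegree : ℝ)) := by
  have : Nonempty V := by
    by_contra hV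
    rw [not_nonempty_iff] at hV
    simp at hδ
  have hδ' : (1 : ℝ) < G.minDegree := by exact_mod_cast hδ
  have hn : (0 : ℝ) < Fintype.card V := by exact_mod_cast Fintype.card_pos
  have hcover : ∀ U : Finset V, U.Nonempty →
      ∃ u, (#U : ℝ) ≤ Fintype.card V / G.minDegree * #{v ∈ U | G.Adj v u} := by
    intro U _
    obtain ⟨u, hu⟩ := G.exists_minDegree_mul_card_le_card_mul_card_filter_adj U
    refine ⟨u, ?_⟩
    rw [div_mul_eq_mul_div, le_div_iff₀ (by linarith), mul_comm]
    exact_mod_cast hu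
  obtain ⟨S, hS, hcard⟩ :=
    exists_cover_card_le_greedyCoverBound (fun u v => G.Adj v u) (by positivity) hcover univ
  refine ⟨S, fun v => hS v (mem_univ v), hcard.trans_eq ?_⟩
  rw [card_univ, greedyCoverBound_of_lt (div_lt_self hn hδ'), div_div_cancel₀ hn.ne']
  ring
end

section
/- Let k > 1 and let f be a good function of order k, i.e., f is defined recursively by f(M_i, N_i) = f(M_{i+1}, N_{i+1}) + 1 where M_{i+1} = M_i − k·⌈M_i/N_i⌉, N_{i+1} = N_i − 1, and f(x, y) = 0 when x ≤ 0 or y ≤ 0. Then for all non-negative integers n, x, y with x and y multiples of k, k ≤ n, and x ≥ y, we have f(x, n) ≥ f(y, n). -/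
/-!
For `N ≥ k > 0` the step `M ↦ M - k⌈M/N⌉` of the recursion preserves residues modulo `k` and is
monotone on each residue class: raising `M` by `k t` raises `⌈M/N⌉` by at most `t`. At `N = k` it
is even constant on each residue class. So, by induction on `n ≥ k`, two arguments `y ≤ x` in the
same residue class stay ordered along the recursion, and the counts `f y n ≤ f x n` follow.
-/

def goodStep (k N M : ℤ) : ℤ := M - k * ⌈(M : ℚ) / N⌉

section goodStep

variable {k N x y : ℤ}

lemma dvd_goodStep_sub_goodStep (hd : k ∣ x - y) : k ∣ goodStep k N x - goodStep k N y := by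
  have h : goodStep k N x - goodStep k N y =
      (x - y) - k * (⌈(x : ℚ) / N⌉ - ⌈(y : ℚ) / N⌉) := by
    unfold goodStep; ring
  rw [h]
  exact hd.sub (dvd_mul_right _ _)

lemma goodStep_self_add_mul (hk : k ≠ 0) (M t : ℤ) :
    goodStep k k (M + k * t) = goodStep k k M := by
  have hkQ : (k : ℚ) ≠ 0 := by exact_mod_cast hk
  have h : ((M + k * t : ℤ) : ℚ) / k = (M : ℚ) / k + t := by
    push_cast; field_simp
  unfold goodStep
  rw [h, Int.ceil_add_intCast]
  ring

lemma goodStep_self_eq_of_dvd_sub (hk : k ≠ 0) (hd : k ∣ x - y) :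
    goodStep k k x = goodStep k k y := by
  obtain ⟨t, ht⟩ := hd
  rw [show x = y + k * t by omega, goodStep_self_add_mul hk]

lemma goodStep_mono (hk : 0 < k) (hkN : k ≤ N) (hd : k ∣ x - y) (hyx : y ≤ x) :
    goodStep k N y ≤ goodStep k N x := by
  obtain ⟨t, ht⟩ := hd
  have ht0 : 0 ≤ t := nonneg_of_mul_nonneg_right (ht ▸ sub_nonneg.mpr hyx) hk
  have hNQ : (0 : ℚ) < N := by exact_mod_cast hk.trans_le hkN
  have hdiv : (x : ℚ) / N ≤ (y : ℚ) / N + t := by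
    have hxQ : (x : ℚ) = y + k * t := by exact_mod_cast (show x = y + k * t by omega)
    have hkt : (k : ℚ) * t ≤ N * t :=
      mul_le_mul_of_nonneg_right (by exact_mod_cast hkN) (by exact_mod_cast ht0)
    rw [div_add' _ _ _ hNQ.ne', div_le_div_iff_of_pos_right hNQ, hxQ]
    linarith
  have hceil : ⌈(x : ℚ) / N⌉ ≤ ⌈(y : ℚ) / N⌉ + t := by
    calc ⌈(x : ℚ) / N⌉ ≤ ⌈(y : ℚ) / N + t⌉ := Int.ceil_le_ceil hdiv
      _ = ⌈(y : ℚ) / N⌉ + t := Int.ceil_add_intCast _ _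
  have := mul_le_mul_of_nonneg_left hceil hk.le
  unfold goodStep
  linarith

end goodStep

structure IsGoodFunction (k : ℤ) (f : ℤ → ℤ → ℤ) : Prop where
  nonneg : ∀ M N, 0 ≤ f M N
  eq_zero : ∀ M N, M ≤ 0 ∨ N ≤ 0 → f M N = 0
  eq_goodStep_add_one : ∀ M N, 0 < M → 0 < N → f M N = f (goodStep k N M) (N - 1) + 1

namespace IsGoodFunction

variable {k : ℤ} {f : ℤ → ℤ → ℤ}

lemma le_of_goodStep_le (hf : IsGoodFunction k f) {n x y : ℤ} (hn : 0 < n) (hyx : y ≤ x)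
    (h : f (goodStep k n y) (n - 1) ≤ f (goodStep k n x) (n - 1)) : f y n ≤ f x n := by
  rcases le_or_gt y 0 with hy | hy
  · rw [hf.eq_zero y n (Or.inl hy)]
    exact hf.nonneg x n
  · rw [hf.eq_goodStep_add_one y n hy hn, hf.eq_goodStep_add_one x n (hy.trans_le hyx) hn]
    omega

lemma le_of_dvd_sub (hf : IsGoodFunction k f) (hk : 0 < k) {n : ℤ} (hn : k ≤ n) :
    ∀ {x y : ℤ}, k ∣ x - y → y ≤ x → f y n ≤ f x n := by
  induction n, hn using Int.leInduction with
  | base =>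
    intro x y hd hyx
    refine hf.le_of_goodStep_le hk hyx (le_of_eq ?_)
    rw [goodStep_self_eq_of_dvd_sub hk.ne' hd]
  | succ n hkn ih =>
    intro x y hd hyx
    refine hf.le_of_goodStep_le (by omega) hyx ?_
    rw [add_sub_cancel_right]
    exact ih (dvd_goodStep_sub_goodStep hd) (goodStep_mono hk (by omega) hd hyx)

end IsGoodFunction

/-- Monotonicity of a good function of order `k` in its first argument
(both arguments multiples of `k`, second argument at least `k`). -/
theorem good_function_monotone (k : ℤ) (hk : 1 < k) (f : ℤ → ℤ → ℤ)
    (hnonneg : ∀ M N, 0 ≤ f M N)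
    (hzero : ∀ M N : ℤ, M ≤ 0 ∨ N ≤ 0 → f M N = 0)
    (hrec : ∀ M N : ℤ, 0 < M → 0 < N →
      f M N = f (M - k * ⌈(M : ℚ) / (N : ℚ)⌉) (N - 1) + 1) :
    ∀ n x y : ℤ, 0 ≤ x → 0 ≤ y → k ∣ x → k ∣ y → k ≤ n → y ≤ x → f y n ≤ f x n := by
  intro n x y _ _ hkx hky hkn hyx
  have hf : IsGoodFunction k f := ⟨hnonneg, hzero, hrec⟩
  exact hf.le_of_dvd_sub (by omega) hkn (dvd_sub hkx hky) hyx
end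

section
/- Let k > 1 and let f be a good function of order k and g a nice function of order k with the same parameters m, n (m a positive multiple of k, k ≤ n) and arbitrary non-negative integer offsets x_i. Then f(m, n) ≥ g(m, n). -/
/-!
Compare the two recursions in lockstep, keeping the argument `M'` of `g` below the argument `M`
of `f` and congruent to it modulo `k`. While `N ≥ k`, the map `M ↦ M - k⌈M/N⌉` is monotone
along a residue class modulo `k` (adding `k t` to `M` raises `⌈M/N⌉` by at most `t`), and the
offsets only push `g`'s argument further down, so the invariant survives each step. At `N = k`
the nice step sends every argument to a non-positive one, so `g` stops after one more step
while `f` takes at least one.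
-/

theorem Int.ceil_add_mul_div_le {α : Type*} [Field α] [LinearOrder α] [IsStrictOrderedRing α]
    [FloorRing α] {a k N : α} (t : ℤ) (hk : 0 ≤ k) (hkN : k ≤ N) (ht : 0 ≤ t) :
    ⌈(a + k * t) / N⌉ ≤ ⌈a / N⌉ + t := by
  have hkt : k * t / N ≤ t :=
    div_le_of_le_mul₀ (hk.trans hkN) (by exact_mod_cast ht)
      (by rw [mul_comm]; exact mul_le_mul_of_nonneg_left hkN (by exact_mod_cast ht))
  calc ⌈(a + k * t) / N⌉ ≤ ⌈a / N + t⌉ := Int.ceil_le_ceil (by rw [add_div]; linarith)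
    _ = ⌈a / N⌉ + t := Int.ceil_add_intCast _ _

theorem Int.sub_mul_ceil_div_le_of_dvd_sub {k N M M' : ℤ} (hk : 0 < k) (hkN : k ≤ N)
    (hle : M' ≤ M) (hd : k ∣ M - M') :
    M' - k * ⌈(M' : ℚ) / N⌉ ≤ M - k * ⌈(M : ℚ) / N⌉ := by
  obtain ⟨t, ht⟩ := hd
  have ht0 : 0 ≤ t := nonneg_of_mul_nonneg_right (ht ▸ sub_nonneg.2 hle) hk
  have hceil : ⌈(M : ℚ) / N⌉ ≤ ⌈(M' : ℚ) / N⌉ + t := by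
    have hM : (M : ℚ) = M' + k * t := by exact_mod_cast (eq_add_of_sub_eq' ht)
    rw [hM]
    exact Int.ceil_add_mul_div_le t (by exact_mod_cast hk.le) (by exact_mod_cast hkN) ht0
  nlinarith

theorem Int.sub_mul_ceil_div_self_nonpos {k : ℤ} (hk : 0 < k) (M : ℤ) :
    M - k * ⌈(M : ℚ) / k⌉ ≤ 0 := by
  have h : (M : ℚ) ≤ k * ⌈(M : ℚ) / k⌉ :=
    (div_le_iff₀' (by exact_mod_cast hk)).1 (Int.le_ceil _)
  have : M ≤ k * ⌈(M : ℚ) / k⌉ := by exact_mod_cast h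
  linarith

theorem nice_le_good_of_le_of_dvd_sub (k : ℤ) (hk : 0 < k) (f g : ℤ → ℤ → ℤ) (x : ℤ → ℤ)
    (hfnonneg : ∀ M N, 0 ≤ f M N)
    (hfrec : ∀ M N : ℤ, 0 < M → 0 < N →
      f M N = f (M - k * ⌈(M : ℚ) / (N : ℚ)⌉) (N - 1) + 1)
    (hx : ∀ N, 0 ≤ x N)
    (hgzero : ∀ M N : ℤ, M ≤ 0 ∨ N ≤ 0 → g M N = 0)
    (hgrec : ∀ M N : ℤ, 0 < M → 0 < N →
      g M N = g (M - k * (⌈(M : ℚ) / (N : ℚ)⌉ + x N)) (N - 1) + 1)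
    (n : ℤ) (hn : k ≤ n) :
    ∀ M M', M' ≤ M → k ∣ M - M' → g M' n ≤ f M n := by
  induction n, hn using Int.leInduction with
  | base =>
    intro M M' hle _
    rcases le_or_gt M' 0 with hM' | hM'
    · rw [hgzero M' k (.inl hM')]
      exact hfnonneg M k
    have hstep : M' - k * (⌈(M' : ℚ) / k⌉ + x k) ≤ 0 := by
      nlinarith [Int.sub_mul_ceil_div_self_nonpos hk M', hx k]
    rw [hgrec M' k hM' hk, hfrec M k (hM'.trans_le hle) hk, hgzero _ _ (.inl hstep)]
    linarith [hfnonneg (M - k * ⌈(M : ℚ) / k⌉) (k - 1)]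
  | succ n hn ih =>
    intro M M' hle hd
    rcases le_or_gt M' 0 with hM' | hM'
    · rw [hgzero M' (n + 1) (.inl hM')]
      exact hfnonneg M (n + 1)
    have hN : 0 < n + 1 := by omega
    set A := M - k * ⌈(M : ℚ) / ↑(n + 1)⌉
    set A' := M' - k * (⌈(M' : ℚ) / ↑(n + 1)⌉ + x (n + 1))
    have hle' : A' ≤ A := by
      nlinarith [Int.sub_mul_ceil_div_le_of_dvd_sub (N := n + 1) hk (by omega) hle hd, hx (n + 1)]
    have hd' : k ∣ A - A' := by
      have : A - A' = M - M' + k * (⌈(M' : ℚ) / ↑(n + 1)⌉ + x (n + 1) - ⌈(M : ℚ) / ↑(n + 1)⌉) := by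
        ring
      exact this ▸ dvd_add hd (dvd_mul_right _ _)
    rw [hgrec M' (n + 1) hM' hN, hfrec M (n + 1) (hM'.trans_le hle) hN, add_sub_cancel_right]
    linarith [ih A A' hle' hd']

theorem good_ge_nice_general (k : ℤ) (hk : 1 < k) (f g : ℤ → ℤ → ℤ) (x : ℤ → ℤ)
    (hfnonneg : ∀ M N, 0 ≤ f M N)
    (hfrec : ∀ M N : ℤ, 0 < M → 0 < N →
      f M N = f (M - k * ⌈(M : ℚ) / (N : ℚ)⌉) (N - 1) + 1)
    (hx : ∀ N, 0 ≤ x N)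
    (hgzero : ∀ M N : ℤ, M ≤ 0 ∨ N ≤ 0 → g M N = 0)
    (hgrec : ∀ M N : ℤ, 0 < M → 0 < N →
      g M N = g (M - k * (⌈(M : ℚ) / (N : ℚ)⌉ + x N)) (N - 1) + 1) :
    ∀ m n : ℤ, 0 < m → k ∣ m → k ≤ n → g m n ≤ f m n := fun m n _ _ hn =>
  nice_le_good_of_le_of_dvd_sub k (by omega) f g x hfnonneg hfrec hx hgzero hgrec n hn m m le_rfl
    (by simp)

/-- A good function of order `k` dominates any nice function of order `k` with the same
parameters `m`, `n` and arbitrary non-negative offsets. -/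
theorem good_ge_nice (k : ℤ) (hk : 1 < k) (f g : ℤ → ℤ → ℤ) (x : ℤ → ℤ)
    (hfnonneg : ∀ M N, 0 ≤ f M N)
    (hfzero : ∀ M N : ℤ, M ≤ 0 ∨ N ≤ 0 → f M N = 0)
    (hfrec : ∀ M N : ℤ, 0 < M → 0 < N →
      f M N = f (M - k * ⌈(M : ℚ) / (N : ℚ)⌉) (N - 1) + 1)
    (hx : ∀ N, 0 ≤ x N)
    (hgnonneg : ∀ M N, 0 ≤ g M N)
    (hgzero : ∀ M N : ℤ, M ≤ 0 ∨ N ≤ 0 → g M N = 0)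
    (hgrec : ∀ M N : ℤ, 0 < M → 0 < N →
      g M N = g (M - k * (⌈(M : ℚ) / (N : ℚ)⌉ + x N)) (N - 1) + 1) :
    ∀ m n : ℤ, 0 < m → k ∣ m → k ≤ n → g m n ≤ f m n :=
  good_ge_nice_general k hk f g x hfnonneg hfrec hx hgzero hgrec
end

section
/- Let k > 1 and let f be a good function of order k. Then for any natural number n ≥ k, f(kn, n)/n ≤ 1 − k! / ∏_{i=0}^{k−1} (k/(k−1) + i). -/
/-!
Write `B_j = (j-1)! / ((k-1) ∏_{i<j} (k/(k-1) + i))` and `L_j(M, N) = B_j M + (1 - k j B_j) N`.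
If `i = ⌈M/N⌉`, one step of the recursion carries `L_i(M - k i, N - 1) + 1` exactly to `L_i(M, N)`,
and `L_i ≤ L_j` on `{M ≤ i N}` for `i ≤ j`, since `L_{t+1} - L_t = (B_t - B_{t+1})(t N - M)` and
`B` decreases. Induction on `N` therefore gives `f(M, N) ≤ L_j(M, N)` whenever `M ≤ j N`, in
particular `f(kn, n) ≤ L_k(kn, n) = (1 - k!/∏_{i<k}(k/(k-1) + i)) n`.
For this the recursion must never jump below `M = 0`, where `L` is nonnegative: this is guaranteed
by keeping `k ∣ M` and `M ≤ N ∨ k ≤ N` along the orbit of `(kn, n)`.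
-/

open Finset Nat

noncomputable def coeffM (k j : ℕ) : ℝ :=
  (j - 1)! / (((k : ℝ) - 1) * ∏ i ∈ range j, ((k : ℝ) / ((k : ℝ) - 1) + i))

noncomputable def linBound (k j : ℕ) (M N : ℝ) : ℝ :=
  coeffM k j * M + (1 - k * j * coeffM k j) * N

section Coefficients

variable {k : ℕ}

theorem one_lt_div_sub_one (hk : 1 < k) : 1 < (k : ℝ) / ((k : ℝ) - 1) := by
  have : (1 : ℝ) < k := by exact_mod_cast hk
  rw [one_lt_div (by linarith)]
  linarith

theorem coeffM_pos (hk : 1 < k) (j : ℕ) : 0 < coeffM k j := by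
  have hα := one_lt_div_sub_one hk
  have : (1 : ℝ) < k := by exact_mod_cast hk
  unfold coeffM
  refine div_pos (by positivity) (mul_pos (by linarith) (prod_pos fun i _ => ?_))
  positivity

theorem coeffM_one (hk : 1 < k) : coeffM k 1 = 1 / k := by
  have : (1 : ℝ) < k := by exact_mod_cast hk
  simp only [coeffM, Nat.sub_self, factorial_zero, cast_one, prod_range_one, CharP.cast_eq_zero,
    add_zero]
  field_simp
  exact div_self (by linarith)

theorem coeffM_succ_mul (hk : 1 < k) {j : ℕ} (hj : 1 ≤ j) :
    coeffM k (j + 1) * ((k : ℝ) / ((k : ℝ) - 1) + j) = j * coeffM k j := by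
  have : (1 : ℝ) < k := by exact_mod_cast hk
  have hα := one_lt_div_sub_one hk
  obtain ⟨j, rfl⟩ := Nat.exists_eq_add_of_le' hj
  have hP : 0 < ∏ i ∈ range (j + 1), ((k : ℝ) / ((k : ℝ) - 1) + i) :=
    prod_pos fun i _ => by positivity
  simp only [coeffM, prod_range_succ, Nat.add_sub_cancel, factorial_succ, cast_mul]
  field_simp

theorem coeffM_succ_le (hk : 1 < k) {j : ℕ} (hj : 1 ≤ j) : coeffM k (j + 1) ≤ coeffM k j := by
  have h := coeffM_succ_mul hk hj
  have hα := one_lt_div_sub_one hk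
  have hB := coeffM_pos hk (j + 1)
  have : (1 : ℝ) ≤ j := by exact_mod_cast hj
  nlinarith

theorem mul_mul_coeffM_le_one (hk : 1 < k) (j : ℕ) : k * j * coeffM k j ≤ 1 := by
  rcases Nat.eq_zero_or_pos j with rfl | hj
  · simp
  induction j, hj using Nat.le_induction with
  | base => rw [coeffM_one hk]; field_simp; simp
  | succ j hj ih =>
    have hα := one_lt_div_sub_one hk
    have hB := coeffM_pos hk (j + 1)
    have hstep : ((j : ℝ) + 1) * coeffM k (j + 1) ≤ j * coeffM k j := by
      nlinarith [coeffM_succ_mul hk hj]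
    calc (k : ℝ) * (j + 1 : ℕ) * coeffM k (j + 1) = k * (((j : ℝ) + 1) * coeffM k (j + 1)) := by
          push_cast; ring
      _ ≤ k * (j * coeffM k j) := by gcongr
      _ ≤ 1 := by linarith

theorem mul_sub_one_mul_coeffM_self (hk : 1 < k) :
    k * ((k : ℝ) - 1) * coeffM k k = k ! / ∏ i ∈ range k, ((k : ℝ) / ((k : ℝ) - 1) + i) := by
  have : (1 : ℝ) < k := by exact_mod_cast hk
  have hk1 : (k : ℝ) - 1 ≠ 0 := by linarith
  have hP : 0 < ∏ i ∈ range k, ((k : ℝ) / ((k : ℝ) - 1) + i) :=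
    prod_pos fun i _ => by have := one_lt_div_sub_one hk; positivity
  rw [coeffM, ← Nat.mul_factorial_pred (by omega : k ≠ 0), cast_mul]
  field_simp

end Coefficients

section LinBound

variable {k : ℕ}

theorem linBound_nonneg (hk : 1 < k) (j : ℕ) {M N : ℝ} (hM : 0 ≤ M) (hN : 0 ≤ N) :
    0 ≤ linBound k j M N :=
  add_nonneg (mul_nonneg (coeffM_pos hk j).le hM)
    (mul_nonneg (sub_nonneg.mpr (mul_mul_coeffM_le_one hk j)) hN)

theorem linBound_sub_add_one (i : ℕ) (M N : ℝ) :
    linBound k i (M - k * i) N + 1 = linBound k i M (N + 1) := by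
  unfold linBound
  ring

theorem linBound_succ_sub (hk : 1 < k) {t : ℕ} (ht : 1 ≤ t) (M N : ℝ) :
    linBound k (t + 1) M N - linBound k t M N = (coeffM k t - coeffM k (t + 1)) * (t * N - M) := by
  have : (1 : ℝ) < k := by exact_mod_cast hk
  have hk1 : (k : ℝ) - 1 ≠ 0 := by linarith
  have h := coeffM_succ_mul hk ht
  field_simp at h
  unfold linBound
  push_cast
  linear_combination (-N) * h

theorem linBound_mono (hk : 1 < k) {i j : ℕ} (hi : 1 ≤ i) (hij : i ≤ j) {M N : ℝ}
    (hN : 0 ≤ N) (hM : M ≤ i * N) : linBound k i M N ≤ linBound k j M N := by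
  induction j, hij using Nat.le_induction with
  | base => rfl
  | succ t hit ih =>
    have hMt : M ≤ t * N := hM.trans (by gcongr)
    have hdiff := linBound_succ_sub hk (hi.trans hit) M N
    have := mul_nonneg (sub_nonneg.mpr (coeffM_succ_le hk (hi.trans hit))) (sub_nonneg.mpr hMt)
    linarith

theorem linBound_self (hk : 1 < k) (N : ℝ) :
    linBound k k (k * N) N = (1 - k ! / ∏ i ∈ range k, ((k : ℝ) / ((k : ℝ) - 1) + i)) * N := by
  rw [← mul_sub_one_mul_coeffM_self hk, linBound]
  ring

end LinBound

theorem mul_le_of_dvd_of_sub_one_mul_lt {k M : ℤ} {i : ℕ} (hdvd : k ∣ M) (hk : 0 < k)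
    (h : ((i : ℤ) - 1) * k < M) : k * i ≤ M := by
  obtain ⟨m, rfl⟩ := hdvd
  have : (i : ℤ) - 1 < m := lt_of_mul_lt_mul_right (by linarith) hk.le
  nlinarith

theorem ceil_step_bounds {k M N : ℤ} {i : ℕ} (hk : 0 < k) (hM : 0 < M) (hN : 0 < N)
    (hlo : ((i : ℤ) - 1) * N < M) (hhi : M ≤ i * N) (hinv : M ≤ N ∨ k ≤ N) :
    ((i : ℤ) - 1) * k < M ∧ (M - k * i ≤ N - 1 ∨ k ≤ N - 1) := by
  have hi : (1 : ℤ) ≤ i := by nlinarith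
  rcases hinv with hMN | hkN
  · have hi1 : (i : ℤ) = 1 := le_antisymm (by nlinarith) hi
    rw [hi1]
    constructor <;> omega
  · refine ⟨(mul_le_mul_of_nonneg_left hkN (by omega)).trans_lt hlo, ?_⟩
    rcases hkN.eq_or_lt with rfl | hkN
    · left; nlinarith
    · right; omega

structure IsGoodFunction_s10 (k : ℕ) (f : ℤ → ℤ → ℤ) : Prop where
  eq_zero : ∀ M N : ℤ, M ≤ 0 ∨ N ≤ 0 → f M N = 0
  eq_add_one : ∀ M N : ℤ, 0 < M → 0 < N →
    f M N = f (M - (k : ℤ) * ⌈(M : ℚ) / (N : ℚ)⌉) (N - 1) + 1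

namespace IsGoodFunction_s10

variable {k : ℕ} {f : ℤ → ℤ → ℤ}

theorem exists_eq_add_one (hf : IsGoodFunction_s10 k f) {M N : ℤ} (hM : 0 < M) (hN : 0 < N) :
    ∃ i : ℕ, ((i : ℤ) - 1) * N < M ∧ M ≤ i * N ∧ f M N = f (M - k * i) (N - 1) + 1 := by
  have hNq : (0 : ℚ) < N := by exact_mod_cast hN
  lift ⌈(M : ℚ) / N⌉ to ℕ using Int.ceil_nonneg (by positivity) with i hi
  obtain ⟨hlo, hhi⟩ := Int.ceil_eq_iff.mp hi.symm
  rw [lt_div_iff₀ hNq] at hlo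
  rw [div_le_iff₀ hNq] at hhi
  exact ⟨i, by exact_mod_cast hlo, by exact_mod_cast hhi, hi ▸ hf.eq_add_one M N hM hN⟩

theorem le_linBound (hk : 1 < k) (hf : IsGoodFunction_s10 k f) (N : ℕ) :
    ∀ M : ℤ, 0 ≤ M → (k : ℤ) ∣ M → (M ≤ N ∨ (k : ℤ) ≤ N) → ∀ j : ℕ, M ≤ j * N →
      (f M N : ℝ) ≤ linBound k j M N := by
  induction N with
  | zero =>
    intro M hM _ _ j _
    rw [Nat.cast_zero, hf.eq_zero M 0 (Or.inr le_rfl)]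
    exact_mod_cast linBound_nonneg hk j (by exact_mod_cast hM) le_rfl
  | succ N ih =>
    intro M hM hdvd hinv j hMj
    rcases hM.eq_or_lt with rfl | hMpos
    · rw [hf.eq_zero 0 _ (Or.inl le_rfl)]
      exact_mod_cast linBound_nonneg hk j le_rfl (by positivity)
    have hk0 : (0 : ℤ) < k := by omega
    have hN : (0 : ℤ) < (N + 1 : ℕ) := by omega
    obtain ⟨i, hlo, hhi, heq⟩ := hf.exists_eq_add_one hMpos hN
    obtain ⟨hlo', hinv'⟩ := ceil_step_bounds hk0 hMpos hN hlo hhi hinv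
    have hki : (k : ℤ) * i ≤ M := mul_le_of_dvd_of_sub_one_mul_lt hdvd hk0 hlo'
    have hi : 1 ≤ i := by
      have : (0 : ℤ) < i := pos_of_mul_pos_left (hMpos.trans_le hhi) hN.le
      omega
    have hij : i ≤ j := by
      have : ((i : ℤ) - 1) < j := lt_of_mul_lt_mul_right (hlo.trans_le hMj) hN.le
      omega
    push_cast at hN hhi hinv' heq ⊢
    simp only [add_sub_cancel_right] at hinv' heq
    have hIH := ih (M - k * i) (by linarith) (dvd_sub hdvd (dvd_mul_right _ _)) hinv' i
      (by nlinarith)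
    calc (f M (N + 1) : ℝ) = f (M - k * i) N + 1 := by rw [heq]; push_cast; ring
      _ ≤ linBound k i (M - k * i : ℤ) N + 1 := by gcongr
      _ = linBound k i M (N + 1) := by push_cast; exact linBound_sub_add_one i M N
      _ ≤ linBound k j M (N + 1) := linBound_mono hk hi hij (by positivity) (by exact_mod_cast hhi)

end IsGoodFunction_s10

theorem good_function_bound_general (k : ℕ) (hk : 1 < k) (f : ℤ → ℤ → ℤ)
    (hzero : ∀ M N : ℤ, M ≤ 0 ∨ N ≤ 0 → f M N = 0)
    (hrec : ∀ M N : ℤ, 0 < M → 0 < N →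
      f M N = f (M - (k : ℤ) * ⌈(M : ℚ) / (N : ℚ)⌉) (N - 1) + 1) :
    ∀ n : ℕ, k ≤ n →
      (f ((k : ℤ) * n) (n : ℤ) : ℝ) / (n : ℝ) ≤
        1 - (Nat.factorial k : ℝ) / ∏ i ∈ Finset.range k, ((k : ℝ) / ((k : ℝ) - 1) + i) := by
  intro n hn
  have hf : IsGoodFunction_s10 k f := ⟨hzero, hrec⟩
  have hbound := hf.le_linBound hk n (k * n) (by positivity) (dvd_mul_right _ _)
    (Or.inr (by exact_mod_cast hn)) k le_rfl
  rw [div_le_iff₀ (by exact_mod_cast (by omega : 0 < n))]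
  push_cast at hbound
  rwa [linBound_self hk] at hbound

/-- For a good function `f` of order `k` and any `n ≥ k`,
`f(kn, n)/n ≤ 1 - k!/∏_{i=0}^{k-1}(k/(k-1)+i)`. -/
theorem good_function_bound (k : ℕ) (hk : 1 < k) (f : ℤ → ℤ → ℤ)
    (hnonneg : ∀ M N, 0 ≤ f M N)
    (hzero : ∀ M N : ℤ, M ≤ 0 ∨ N ≤ 0 → f M N = 0)
    (hrec : ∀ M N : ℤ, 0 < M → 0 < N →
      f M N = f (M - (k : ℤ) * ⌈(M : ℚ) / (N : ℚ)⌉) (N - 1) + 1) :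
    ∀ n : ℕ, k ≤ n →
      (f ((k : ℤ) * n) (n : ℤ) : ℝ) / (n : ℝ) ≤
        1 - (Nat.factorial k : ℝ) / ∏ i ∈ Finset.range k, ((k : ℝ) / ((k : ℝ) - 1) + i) :=
  good_function_bound_general k hk f hzero hrec
end

section
/- Let G = (X, Y) be a bipartite graph of order n with |X| = |Y| and minimum degree δ(G) ≥ k for some integer k > 1. Then γ_t(G) ≤ n·(1 − k! / ∏_{i=0}^{k−1} (k/(k−1) + i)). -/
/-!
Choose for every vertex `x` a set `A x` of `k = m + 1` of its neighbours and label the vertices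
independently and uniformly at random. The vertices carrying the largest label of some `A x` form
a total dominating set. A vertex `v` with label `t` stays outside this set exactly when every one
of the `d v` sets `A x` containing it has a label above `t`; these events are increasing, so by the
FKG inequality they occur together with probability at least `(1 - t ^ m) ^ d v`. Since the `d v`
average to `k`, AM-GM and integration over `t` bound the expected size of the set by
`n * (1 - ∫₀¹ (1 - s ^ m) ^ k ds)`, and integration by parts evaluates this integral to
`k! / ∏_{i<k} (k / (k - 1) + i)`. Labels are drawn from `Fin N` rather than `[0, 1]`, which costs
an additive `n / N` that vanishes as `N → ∞`.
-/

open Finset Filter Topology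

open scoped Nat

lemma integral_one_sub_pow_pow_succ (m k : ℕ) :
    ((k + 1) * m + 1 : ℝ) * ∫ s in (0 : ℝ)..1, (1 - s ^ m) ^ (k + 1) =
      (k + 1) * m * ∫ s in (0 : ℝ)..1, (1 - s ^ m) ^ k := by
  -- integrate `(1 - s ^ m) ^ (k + 1) * 1` by parts, then write `s ^ m = 1 - (1 - s ^ m)`
  have hparts := intervalIntegral.integral_mul_deriv_eq_deriv_mul (a := 0) (b := 1)
    (u := fun s : ℝ => (1 - s ^ m) ^ (k + 1)) (v := fun s => s) (v' := fun _ => 1)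
    (u' := fun s => (k + 1 : ℕ) * (1 - s ^ m) ^ k * -(m * s ^ (m - 1)))
    (fun s _ => by simpa using ((hasDerivAt_pow m s).const_sub 1).fun_pow (k + 1))
    (fun s _ => hasDerivAt_id' s) (by apply Continuous.intervalIntegrable; fun_prop)
    (by apply Continuous.intervalIntegrable; fun_prop)
  have hsm : ∀ s : ℝ, (k + 1 : ℕ) * (1 - s ^ m) ^ k * -(m * s ^ (m - 1)) * s =
      -((k + 1) * m * ((1 - s ^ m) ^ k - (1 - s ^ m) ^ (k + 1))) := by
    intro s
    rcases m with _ | m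
    · simp
    · push_cast; ring
  simp only [hsm, mul_one, intervalIntegral.integral_neg, intervalIntegral.integral_const_mul,
    one_pow, sub_self, zero_pow (Nat.succ_ne_zero k), mul_zero, zero_sub, neg_neg] at hparts
  rw [intervalIntegral.integral_sub (by apply Continuous.intervalIntegrable; fun_prop)
    (by apply Continuous.intervalIntegrable; fun_prop)] at hparts
  linear_combination hparts

lemma integral_one_sub_pow_pow {m : ℕ} (hm : 0 < m) (k : ℕ) :
    ∫ s in (0 : ℝ)..1, (1 - s ^ m) ^ k = k ! / ∏ i ∈ range k, (((m : ℝ) + 1) / m + i) := by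
  induction k with
  | zero => simp
  | succ k ih =>
    have hrec := integral_one_sub_pow_pow_succ m k
    rw [ih] at hrec
    have hm' : (0 : ℝ) < m := by exact_mod_cast hm
    have hprod : (0 : ℝ) < ∏ i ∈ range k, (((m : ℝ) + 1) / m + i) :=
      prod_pos fun i _ => by positivity
    rw [prod_range_succ, Nat.factorial_succ, Nat.cast_mul, Nat.cast_succ]
    field_simp at hrec ⊢
    linear_combination hrec

lemma one_sub_pow_mem_Icc {s : ℝ} (hs : s ∈ Set.Icc 0 1) (m : ℕ) : 1 - s ^ m ∈ Set.Icc 0 1 :=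
  ⟨sub_nonneg.2 (pow_le_one₀ hs.1 hs.2), sub_le_self _ (pow_nonneg hs.1 m)⟩

lemma antitoneOn_one_sub_pow_pow (m k : ℕ) :
    AntitoneOn (fun s : ℝ => (1 - s ^ m) ^ k) (Set.Icc 0 1) := fun a ha b hb hab =>
  pow_le_pow_left₀ (one_sub_pow_mem_Icc hb m).1 (by gcongr; exact ha.1) k

lemma natCast_mul_integral_sub_one_le_sum (m k : ℕ) {N : ℕ} (hN : 0 < N) :
    N * (∫ s in (0 : ℝ)..1, (1 - s ^ m) ^ k) - 1 ≤
      ∑ t ∈ range N, (1 - ((t + 1 : ℝ) / N) ^ m) ^ k := by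
  set g : ℝ → ℝ := fun u => (1 - (u / N) ^ m) ^ k
  have hN' : (0 : ℝ) < N := by exact_mod_cast hN
  have hdiv : ∀ u ∈ Set.Icc (0 : ℝ) (0 + N), u / N ∈ Set.Icc 0 1 := fun u hu =>
    ⟨div_nonneg hu.1 hN'.le, (div_le_one hN').2 (by simpa using hu.2)⟩
  have hanti : AntitoneOn g (Set.Icc 0 (0 + N)) := fun a ha b hb hab =>
    antitoneOn_one_sub_pow_pow m k (hdiv a ha) (hdiv b hb) (by gcongr)
  have hint : ∫ u in (0 : ℝ)..0 + N, g u = N * ∫ s in (0 : ℝ)..1, (1 - s ^ m) ^ k := by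
    simp [g, intervalIntegral.integral_comp_div (fun s => (1 - s ^ m) ^ k) hN'.ne', hN'.ne']
  have hshift : ∑ t ∈ range N, g (t + 1) + g 0 = ∑ t ∈ range N, g t + g N := by
    rw [← sum_range_succ (fun t : ℕ => g t), sum_range_succ']
    push_cast; rfl
  have hg0 : g 0 ≤ 1 := pow_le_one₀ (one_sub_pow_mem_Icc (hdiv 0 (by simp)) m).1
    (one_sub_pow_mem_Icc (hdiv 0 (by simp)) m).2
  have hgN : 0 ≤ g N := pow_nonneg (one_sub_pow_mem_Icc (hdiv N (by simp)) m).1 k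
  have hle := hanti.integral_le_sum
  rw [hint] at hle
  simp only [zero_add] at hle
  change _ ≤ ∑ t ∈ range N, g (t + 1)
  linarith

lemma card_mul_pow_le_sum_pow {ι : Type*} [Fintype ι] {r : ℝ} (hr : 0 ≤ r) (d : ι → ℕ) (k : ℕ)
    (hd : ∑ i, d i = k * Fintype.card ι) :
    Fintype.card ι * r ^ k ≤ ∑ i, r ^ d i := by
  rcases isEmpty_or_nonempty ι with _ | _
  · simp
  have hn : (0 : ℝ) < Fintype.card ι := by exact_mod_cast Fintype.card_pos
  have hw : ∑ _i : ι, (Fintype.card ι : ℝ)⁻¹ = 1 := by simp [hn.ne']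
  -- AM-GM for the numbers `r ^ d i`, whose geometric mean is `r ^ k`
  have hamgm := Real.geom_mean_le_arith_mean_weighted univ (fun _ => (Fintype.card ι : ℝ)⁻¹)
    (fun i => r ^ d i) (fun _ _ => by positivity) hw (fun _ _ => by positivity)
  have hgeom : ∏ i, (r ^ d i) ^ (Fintype.card ι : ℝ)⁻¹ = r ^ k := by
    simp_rw [← Real.rpow_natCast, ← Real.rpow_mul hr]
    rw [← Real.rpow_sum_of_nonneg hr (fun _ _ => by positivity), ← sum_mul]
    rw [← Nat.cast_sum, hd]
    push_cast
    rw [mul_inv_cancel_right₀ hn.ne']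
  rw [hgeom, ← mul_sum] at hamgm
  rwa [le_inv_mul_iff₀ hn] at hamgm

section Harris

variable {α : Type*} [DistribLattice α] [Fintype α] [DecidableEq α]

lemma card_inter_mul_card_inter_le {F A B : Finset α} (hFsup : SupClosed (F : Set α))
    (hFinf : InfClosed (F : Set α)) (hA : IsUpperSet (A : Set α)) (hB : IsUpperSet (B : Set α)) :
    #(F ∩ A) * #(F ∩ B) ≤ #F * #(F ∩ A ∩ B) := by
  have hfkg := fkg (μ := fun a => if a ∈ F then 1 else 0) (f := fun a => if a ∈ A then 1 else 0)
    (g := fun a => if a ∈ B then (1 : ℕ) else 0) (fun _ => by positivity) (fun _ => by positivity)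
    (fun _ => by positivity) (fun a b hab => by by_cases a ∈ A <;> grind [IsUpperSet])
    (fun a b hab => by by_cases a ∈ B <;> grind [IsUpperSet])
    (fun a b => by by_cases a ∈ F <;> by_cases b ∈ F <;> grind [SupClosed, InfClosed])
  simpa only [ite_zero_mul_ite_zero, mul_one, sum_boole, Nat.cast_id, ← mem_inter,
    filter_mem_eq_inter, univ_inter, inter_assoc] using hfkg

lemma card_mul_prod_card_inter_le {ι : Type*} {F : Finset α} (hFsup : SupClosed (F : Set α))
    (hFinf : InfClosed (F : Set α)) (T : Finset ι) {A : ι → Finset α}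
    (hA : ∀ x ∈ T, IsUpperSet (A x : Set α)) :
    #F * ∏ x ∈ T, #(F ∩ A x) ≤ #(F ∩ T.inf A) * #F ^ #T := by
  classical
  induction T using Finset.induction_on with
  | empty => simp
  | @insert x T hx ih =>
    have hinf : IsUpperSet ((T.inf A : Finset α) : Set α) := fun a b hab ha => by
      simp only [mem_coe, mem_inf] at ha ⊢
      exact fun y hy => hA y (mem_insert_of_mem hy) hab (ha y hy)
    calc #F * ∏ y ∈ insert x T, #(F ∩ A y) = #(F ∩ A x) * (#F * ∏ y ∈ T, #(F ∩ A y)) := by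
          rw [prod_insert hx]; ring
      _ ≤ #(F ∩ A x) * (#(F ∩ T.inf A) * #F ^ #T) :=
          Nat.mul_le_mul_left _ (ih fun y hy => hA y (mem_insert_of_mem hy))
      _ ≤ #F * #(F ∩ A x ∩ T.inf A) * #F ^ #T := by
          rw [← mul_assoc]
          exact Nat.mul_le_mul_right _
            (card_inter_mul_card_inter_le hFsup hFinf (hA x (mem_insert_self x T)) hinf)
      _ = #(F ∩ (insert x T).inf A) * #F ^ #(insert x T) := by
          rw [inf_insert, card_insert_of_notMem hx, inf_eq_inter, inter_assoc]; ring

end Harris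

section Labelling

variable {V : Type*} [Fintype V] [DecidableEq V] {N : ℕ}

lemma filter_apply_eq_eq_piFinset (v : V) (t : Fin N) :
    ({ℓ : V → Fin N | ℓ v = t} : Finset _) =
      Fintype.piFinset fun w => if w = v then {t} else univ := by
  ext ℓ; simp only [mem_filter, mem_univ, true_and, Fintype.mem_piFinset]
  constructor
  · rintro rfl w; split_ifs with h <;> simp [h]
  · intro h; simpa using h v

lemma mul_card_filter_apply_eq (v : V) (t : Fin N) :
    N * #{ℓ : V → Fin N | ℓ v = t} = N ^ Fintype.card V := by
  have : Nonempty V := ⟨v⟩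
  rw [filter_apply_eq_eq_piFinset, Fintype.card_piFinset]
  simp only [apply_ite, card_singleton, card_univ, Fintype.card_fin, prod_ite, prod_const_one,
    one_mul, prod_const, filter_ne', card_erase_of_mem (mem_univ v)]
  rw [← pow_succ', Nat.sub_add_cancel Fintype.card_pos]

lemma card_filter_apply_eq_and_forall_le (v : V) (t : Fin N) {B : Finset V} (hv : v ∈ B) :
    (#{ℓ : V → Fin N | ℓ v = t ∧ ∀ a ∈ B, ℓ a ≤ t} : ℝ) =
      #{ℓ : V → Fin N | ℓ v = t} * ((t + 1 : ℝ) / N) ^ (#B - 1) := by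
  have hN : (0 : ℝ) < N := by exact_mod_cast t.pos
  have hset : ({ℓ : V → Fin N | ℓ v = t ∧ ∀ a ∈ B, ℓ a ≤ t} : Finset _) =
      Fintype.piFinset fun w => if w = v then {t} else if w ∈ B then Iic t else univ := by
    ext ℓ; simp only [mem_filter, mem_univ, true_and, Fintype.mem_piFinset]
    constructor
    · rintro ⟨rfl, h⟩ w
      split_ifs with h1 h2
      · simp [h1]
      · simpa using h w h2
      · simp
    · intro h
      refine ⟨by simpa using h v, fun a ha => ?_⟩
      have := h a
      split_ifs at this with h1 <;> simp_all
  have hcard : ∀ w, (#(if w = v then {t} else if w ∈ B then Iic t else univ) : ℝ) =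
      #(if w = v then {t} else univ) * (if w ∈ B.erase v then (t + 1 : ℝ) / N else 1) := by
    intro w
    by_cases h1 : w = v
    · simp [h1]
    · by_cases h2 : w ∈ B
      · simp [h1, h2]; field_simp
      · simp [h1, h2]
  rw [hset, filter_apply_eq_eq_piFinset, Fintype.card_piFinset, Fintype.card_piFinset]
  push_cast
  simp_rw [hcard]
  rw [prod_mul_distrib, prod_ite_mem, univ_inter, prod_const, card_erase_of_mem hv]

lemma card_filter_apply_eq_and_exists_lt (v : V) (t : Fin N) {B : Finset V} (hv : v ∈ B) :
    (#{ℓ : V → Fin N | ℓ v = t ∧ ∃ a ∈ B, t < ℓ a} : ℝ) =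
      #{ℓ : V → Fin N | ℓ v = t} * (1 - ((t + 1 : ℝ) / N) ^ (#B - 1)) := by
  set F : Finset (V → Fin N) := {ℓ | ℓ v = t}
  set box : Finset (V → Fin N) := {ℓ | ℓ v = t ∧ ∀ a ∈ B, ℓ a ≤ t}
  have hsdiff : ({ℓ | ℓ v = t ∧ ∃ a ∈ B, t < ℓ a} : Finset (V → Fin N)) = F \ box := by
    ext ℓ; simp +contextual [F, box]
  have hsub : box ⊆ F := fun ℓ hℓ => mem_filter.2 ⟨mem_univ ℓ, (mem_filter.1 hℓ).2.1⟩
  rw [hsdiff, card_sdiff_of_subset hsub, Nat.cast_sub (card_le_card hsub),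
    card_filter_apply_eq_and_forall_le v t hv]
  ring

variable {β : Type*} [LinearOrder β]

def labelMaxima (A : V → Finset V) (ℓ : V → β) : Finset V :=
  {v | ∃ x, v ∈ A x ∧ ∀ a ∈ A x, ℓ a ≤ ℓ v}

lemma exists_mem_labelMaxima (A : V → Finset V) (ℓ : V → β) {x : V} (hx : (A x).Nonempty) :
    ∃ u ∈ A x, u ∈ labelMaxima A ℓ := by
  obtain ⟨u, hu, hmax⟩ := (A x).exists_max_image ℓ hx
  exact ⟨u, hu, mem_filter.2 ⟨mem_univ u, x, hu, hmax⟩⟩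

lemma pow_mul_pow_le_card_notMem_labelMaxima {A : V → Finset V} {m : ℕ} (v : V)
    (hA : ∀ x, v ∈ A x → #(A x) = m + 1) (t : Fin N) :
    (N : ℝ) ^ Fintype.card V * (1 - ((t + 1 : ℝ) / N) ^ m) ^ #{x | v ∈ A x} ≤
      N * #{ℓ : V → Fin N | ℓ v = t ∧ v ∉ labelMaxima A ℓ} := by
  set F : Finset (V → Fin N) := {ℓ | ℓ v = t}
  set U : V → Finset (V → Fin N) := fun x => {ℓ | ∃ a ∈ A x, t < ℓ a}
  set T : Finset V := {x | v ∈ A x}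
  have hFsup : SupClosed (F : Set (V → Fin N)) := fun ℓ hℓ ℓ' hℓ' => by
    simp_all [F]
  have hFinf : InfClosed (F : Set (V → Fin N)) := fun ℓ hℓ ℓ' hℓ' => by
    simp_all [F]
  have hU : ∀ x ∈ T, IsUpperSet (U x : Set (V → Fin N)) := fun x _ ℓ ℓ' hle hℓ => by
    simp only [U, coe_filter, Set.mem_ofPred_eq, mem_univ, true_and] at hℓ ⊢
    obtain ⟨a, ha, hlt⟩ := hℓ
    exact ⟨a, ha, hlt.trans_le (hle a)⟩
  have hinter : F ∩ T.inf U = ({ℓ | ℓ v = t ∧ v ∉ labelMaxima A ℓ} : Finset _) := by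
    ext ℓ
    simp only [F, T, U, labelMaxima, mem_inter, mem_filter, mem_inf, mem_univ, true_and, not_exists,
      not_and, not_forall, not_le, exists_prop, and_congr_right_iff]
    rintro rfl
    rfl
  have hcardU : ∀ x ∈ T, (#(F ∩ U x) : ℝ) = #F * (1 - ((t + 1 : ℝ) / N) ^ m) := by
    intro x hx
    have hvx : v ∈ A x := (mem_filter.1 hx).2
    rw [← filter_and, card_filter_apply_eq_and_exists_lt v t hvx, hA x hvx, Nat.add_sub_cancel]
  have harris : (#F : ℝ) * ∏ x ∈ T, (#(F ∩ U x) : ℝ) ≤ #(F ∩ T.inf U) * (#F : ℝ) ^ #T := by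
    exact_mod_cast card_mul_prod_card_inter_le hFsup hFinf T hU
  have hF : (N : ℝ) * #F = (N : ℝ) ^ Fintype.card V := by
    exact_mod_cast mul_card_filter_apply_eq v t
  have hFpos : (0 : ℝ) < #F := by
    have : (fun _ => t : V → Fin N) ∈ F := mem_filter.2 ⟨mem_univ _, rfl⟩
    exact_mod_cast card_pos.2 ⟨_, this⟩
  rw [prod_congr rfl hcardU, prod_const, mul_pow, hinter, ← mul_assoc, mul_comm (#F : ℝ),
    mul_assoc, mul_comm] at harris
  rw [← hF, mul_assoc]
  gcongr
  exact le_of_mul_le_mul_right harris (pow_pos hFpos _)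

lemma sum_card_filter_mem_eq_mul_card (A : V → Finset V) {k : ℕ} (hA : ∀ x, #(A x) = k) :
    ∑ v, #{x | v ∈ A x} = k * Fintype.card V := by
  have := sum_card_bipartiteAbove_eq_sum_card_bipartiteBelow (s := univ) (t := univ)
    (r := fun v x => v ∈ A x)
  simp only [bipartiteAbove, bipartiteBelow, filter_univ_mem, hA] at this
  rw [this, sum_const, card_univ, smul_eq_mul, mul_comm]

lemma sum_sum_card_filter_apply_eq_and_notMem (L : (V → Fin N) → Finset V) :
    ∑ v, ∑ t : Fin N, #{ℓ : V → Fin N | ℓ v = t ∧ v ∉ L ℓ} = ∑ ℓ : V → Fin N, #(L ℓ)ᶜ := by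
  have hfib : ∀ v, ∑ t : Fin N, #{ℓ : V → Fin N | ℓ v = t ∧ v ∉ L ℓ} =
      #{ℓ : V → Fin N | v ∉ L ℓ} := fun v => by
    rw [card_eq_sum_card_fiberwise (f := fun ℓ : V → Fin N => ℓ v) (t := univ)
      (fun _ _ => mem_coe.2 (mem_univ _))]
    simp only [filter_filter, and_comm]
  have := sum_card_bipartiteAbove_eq_sum_card_bipartiteBelow (s := univ) (t := univ)
    (r := fun (v : V) (ℓ : V → Fin N) => v ∉ L ℓ)
  simp only [bipartiteAbove, bipartiteBelow] at this
  simp only [hfib, this, compl_eq_univ_sdiff, filter_notMem_eq_sdiff]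

lemma pow_mul_mul_le_mul_sum_card_compl_labelMaxima {A : V → Finset V} {m : ℕ}
    (hA : ∀ x, #(A x) = m + 1) (hN : 0 < N) :
    (N : ℝ) ^ Fintype.card V * Fintype.card V *
        (N * (∫ s in (0 : ℝ)..1, (1 - s ^ m) ^ (m + 1)) - 1) ≤
      N * ∑ ℓ : V → Fin N, (#(labelMaxima A ℓ)ᶜ : ℝ) := by
  set r : ℕ → ℝ := fun t => 1 - ((t + 1 : ℝ) / N) ^ m
  have hr : ∀ t ∈ range N, 0 ≤ r t := fun t ht => (one_sub_pow_mem_Icc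
    ⟨by positivity, (div_le_one (by exact_mod_cast hN)).2 (by exact_mod_cast mem_range.1 ht)⟩ m).1
  calc (N : ℝ) ^ Fintype.card V * Fintype.card V *
        (N * (∫ s in (0 : ℝ)..1, (1 - s ^ m) ^ (m + 1)) - 1)
      ≤ N ^ Fintype.card V * Fintype.card V * ∑ t ∈ range N, r t ^ (m + 1) := by
        gcongr; exact natCast_mul_integral_sub_one_le_sum m (m + 1) hN
    _ ≤ ∑ t ∈ range N, N ^ Fintype.card V * ∑ v, r t ^ #{x | v ∈ A x} := by
        rw [mul_sum]
        refine sum_le_sum fun t ht => ?_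
        rw [mul_assoc]
        gcongr
        exact card_mul_pow_le_sum_pow (hr t ht) _ _ (sum_card_filter_mem_eq_mul_card A hA)
    _ = ∑ v, ∑ t : Fin N, N ^ Fintype.card V * r t ^ #{x | v ∈ A x} := by
        rw [sum_comm, ← Fin.sum_univ_eq_sum_range]
        simp_rw [mul_sum]
    _ ≤ ∑ v, ∑ t : Fin N, N * (#{ℓ : V → Fin N | ℓ v = t ∧ v ∉ labelMaxima A ℓ} : ℝ) :=
        sum_le_sum fun v _ => sum_le_sum fun t _ =>
          pow_mul_pow_le_card_notMem_labelMaxima v (fun x _ => hA x) t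
    _ = N * ∑ ℓ : V → Fin N, (#(labelMaxima A ℓ)ᶜ : ℝ) := by
        simp_rw [← mul_sum]
        exact_mod_cast congrArg _ (sum_sum_card_filter_apply_eq_and_notMem (labelMaxima A))

lemma exists_card_labelMaxima_le {A : V → Finset V} {m : ℕ} (hA : ∀ x, #(A x) = m + 1)
    (hN : 0 < N) :
    ∃ ℓ : V → Fin N, (#(labelMaxima A ℓ) : ℝ) ≤
      Fintype.card V * (1 - ∫ s in (0 : ℝ)..1, (1 - s ^ m) ^ (m + 1)) + Fintype.card V / N := by
  set n := Fintype.card V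
  set c := ∫ s in (0 : ℝ)..1, (1 - s ^ m) ^ (m + 1)
  have hN' : (0 : ℝ) < N := by exact_mod_cast hN
  have : NeZero N := ⟨hN.ne'⟩
  obtain ⟨ℓ, -, hℓ⟩ := exists_le_of_sum_le (s := univ) univ_nonempty
    (f := fun _ => n * (c - 1 / N)) (g := fun ℓ : V → Fin N => (#(labelMaxima A ℓ)ᶜ : ℝ)) (by
      rw [sum_const, card_univ, Fintype.card_fun, Fintype.card_fin, nsmul_eq_mul,
        ← mul_le_mul_iff_of_pos_left hN']
      push_cast
      have : (N : ℝ) * (N ^ n * (n * (c - 1 / N))) = N ^ n * n * (N * c - 1) := by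
        field_simp
      exact this.trans_le (pow_mul_mul_le_mul_sum_card_compl_labelMaxima hA hN))
  refine ⟨ℓ, ?_⟩
  have hcard : (#(labelMaxima A ℓ)ᶜ : ℝ) + #(labelMaxima A ℓ) = n := by
    exact_mod_cast card_compl_add_card (labelMaxima A ℓ)
  have hsplit : (n : ℝ) * (c - 1 / N) = n * c - n / N := by ring
  linarith

end Labelling

def SimpleGraph.IsTotalDominatingSet {V : Type*} (G : SimpleGraph V) (S : Finset V) : Prop :=
  ∀ v, ∃ u ∈ S, G.Adj v u

lemma SimpleGraph.exists_isTotalDominatingSet_card_le {V : Type*} [Fintype V] [DecidableEq V]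
    (G : SimpleGraph V) [DecidableRel G.Adj] {m : ℕ} (hdeg : ∀ v, m + 1 ≤ G.degree v) {N : ℕ}
    (hN : 0 < N) :
    ∃ S : Finset V, G.IsTotalDominatingSet S ∧ (#S : ℝ) ≤
      Fintype.card V * (1 - ∫ s in (0 : ℝ)..1, (1 - s ^ m) ^ (m + 1)) + Fintype.card V / N := by
  choose A hAG hA using fun x => exists_subset_card_eq (s := G.neighborFinset x)
    ((hdeg x).trans_eq (G.card_neighborFinset_eq_degree x).symm)
  obtain ⟨ℓ, hℓ⟩ := exists_card_labelMaxima_le hA hN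
  refine ⟨labelMaxima A ℓ, fun x => ?_, hℓ⟩
  obtain ⟨u, hux, hu⟩ := exists_mem_labelMaxima A ℓ (x := x) (card_pos.1 (by rw [hA x]; omega))
  exact ⟨u, hu, (G.mem_neighborFinset x u).1 (hAG x hux)⟩

theorem total_domination_balanced_bipartite_general {V : Type*} [Fintype V]
    (G : SimpleGraph V) [DecidableRel G.Adj] (k : ℕ) (hk : 1 < k)
    (hdeg : ∀ v : V, k ≤ G.degree v) :
    ∃ S : Finset V, (∀ v : V, ∃ u ∈ S, G.Adj v u) ∧
      (S.card : ℝ) ≤ (Fintype.card V : ℝ) *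
        (1 - (Nat.factorial k : ℝ) / ∏ i ∈ Finset.range k, ((k : ℝ) / ((k : ℝ) - 1) + i)) := by
  classical
  obtain ⟨m, rfl⟩ : ∃ m, k = m + 1 := ⟨k - 1, by omega⟩
  have hconst : ((m + 1) ! : ℝ) / ∏ i ∈ range (m + 1), (((m + 1 : ℕ) : ℝ) / ((m + 1 : ℕ) - 1) + i) =
      ∫ s in (0 : ℝ)..1, (1 - s ^ m) ^ (m + 1) := by
    rw [integral_one_sub_pow_pow (by omega)]
    push_cast
    simp only [add_sub_cancel_right]
  set n := Fintype.card V
  set c := ∫ s in (0 : ℝ)..1, (1 - s ^ m) ^ (m + 1)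
  obtain ⟨S₁, hS₁, -⟩ := G.exists_isTotalDominatingSet_card_le hdeg one_pos
  obtain ⟨S, hS, hmin⟩ := ({S | G.IsTotalDominatingSet S} : Finset (Finset V)).exists_min_image
    card ⟨S₁, mem_filter.2 ⟨mem_univ _, hS₁⟩⟩
  refine ⟨S, (mem_filter.1 hS).2, ?_⟩
  rw [hconst]
  -- `S` has minimum size, so it obeys the bound `n * (1 - c) + n / N` for every `N`
  have hlim : Tendsto (fun N : ℕ => n * (1 - c) + n / N) atTop (𝓝 (n * (1 - c))) := by
    simpa using (tendsto_const_div_atTop_nhds_zero_nat (n : ℝ)).const_add ((n : ℝ) * (1 - c))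
  refine ge_of_tendsto hlim ((eventually_gt_atTop 0).mono fun N hN => ?_)
  obtain ⟨T, hT, hTle⟩ := G.exists_isTotalDominatingSet_card_le hdeg hN
  exact (Nat.cast_le.2 (hmin T (mem_filter.2 ⟨mem_univ _, hT⟩))).trans hTle

/-- Total domination bound for bipartite graphs with equal parts and minimum degree at least `k`. -/
theorem total_domination_balanced_bipartite {V : Type*} [Fintype V] [DecidableEq V]
    (G : SimpleGraph V) [DecidableRel G.Adj] (k : ℕ) (hk : 1 < k)
    (X : Finset V) (hbip : ∀ ⦃u v : V⦄, G.Adj u v → (u ∈ X ↔ v ∉ X))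
    (hcard : 2 * X.card = Fintype.card V)
    (hdeg : ∀ v : V, k ≤ G.degree v) :
    ∃ S : Finset V, (∀ v : V, ∃ u ∈ S, G.Adj v u) ∧
      (S.card : ℝ) ≤ (Fintype.card V : ℝ) *
        (1 - (Nat.factorial k : ℝ) / ∏ i ∈ Finset.range k, ((k : ℝ) / ((k : ℝ) - 1) + i)) :=
  total_domination_balanced_bipartite_general G k hk hdeg
end

section
/- For all real x ≥ 10, (1 + ln x)/x + e^{−(ln x + 1)/(x−1)} > 1. -/
/-- For all real `x ≥ 10`, `(1 + ln x)/x + e^{-(ln x + 1)/(x-1)} > 1`. -/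
theorem exp_log_inequality (x : ℝ) (hx : 10 ≤ x) :
    (1 + Real.log x) / x + Real.exp (-(Real.log x + 1) / (x - 1)) > 1 := by
  have hx0 : (0:ℝ) < x := by linarith
  have hx1 : (0:ℝ) < x - 1 := by linarith
  set L := Real.log x with hLdef
  -- 2 ≤ L
  have hL2 : 2 ≤ L := by
    rw [hLdef, Real.le_log_iff_exp_le hx0]
    have h := Real.exp_one_lt_d9
    have h2 : Real.exp 2 = Real.exp 1 * Real.exp 1 := by
      rw [← Real.exp_add]; norm_num
    nlinarith [Real.exp_pos 1]
  -- L ≤ x/4 + 0.39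
  have hLup : L ≤ x/4 + 0.39 := by
    have h4 : (0:ℝ) < x/4 := by linarith
    have := Real.log_le_sub_one_of_pos h4
    have hlog4 : Real.log (x/4) = L - Real.log 4 := by
      rw [hLdef, Real.log_div (by linarith) (by norm_num)]
    have h2 : Real.log 4 = 2 * Real.log 2 := by
      rw [show (4:ℝ) = 2^2 by norm_num, Real.log_pow]; norm_num
    have := Real.log_two_lt_d9
    have := Real.log_two_gt_d9
    nlinarith
  set t := (L + 1)/(x - 1) with htdef
  have htx : t * (x - 1) = L + 1 := div_mul_cancel₀ _ (ne_of_gt hx1)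
  have ht0 : 0 < t := by positivity
  have ht_half : t ≤ 1/2 := by
    rw [htdef, div_le_iff₀ hx1]; nlinarith
  -- exp bound
  have habs : |(-t)| ≤ 1 := by rw [abs_neg, abs_of_pos ht0]; linarith
  have hb := Real.exp_bound habs (n := 3) (by norm_num)
  have hsum : ∑ m ∈ Finset.range 3, (-t) ^ m / (m.factorial : ℝ) = 1 - t + t^2/2 := by
    rw [Finset.sum_range_succ, Finset.sum_range_succ, Finset.sum_range_succ,
      Finset.sum_range_zero]
    norm_num [Nat.factorial]; ring
  rw [hsum, abs_neg, abs_of_pos ht0] at hb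
  have hexp : Real.exp (-t) ≥ 1 - t + t^2/2 - 2*t^3/9 := by
    have := abs_le.mp hb
    have h : t^3 * ((3:ℕ).succ / ((3:ℕ).factorial * 3) : ℝ) = 2*t^3/9 := by
      norm_num [Nat.factorial]; ring
    nlinarith [this.1]
  have hgoal : -(L + 1) / (x - 1) = -t := by rw [htdef]; ring
  rw [hgoal]
  have hxt : 3 + t ≤ x * t := by nlinarith
  have hcoef : (7:ℝ)/18 ≤ 1/2 - 2*t/9 := by linarith
  have hprod : (3 + t) * (7/18) ≤ (x * t) * (1/2 - 2*t/9) := by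
    apply mul_le_mul hxt hcoef (by linarith) (by nlinarith)
  have key : (1 + L) / x > t - t^2/2 + 2*t^3/9 := by
    rw [gt_iff_lt, lt_div_iff₀ hx0]
    nlinarith [mul_le_mul_of_nonneg_left hprod (le_of_lt ht0)]
  linarith [hexp, key]
end
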